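/- arXiv:1012.3563 — 3 statements merged into one kernel-verified Lean document; each statement's English description precedes it below -/
import Mathlib

section
/- Let p ∈ S_d be a homogeneous polynomial of degree d in x_0,…,x_n over ℂ, and let r ≥ 1. Suppose there exists a homogeneous ideal J ⊆ S such that h_{S/J}(e) ≤ r for every e ≥ 0 and α ⌟ p = 0 for every α ∈ J ∩ S_d. Then cr_i(p) ≤ r for every i with 0 ≤ i ≤ d. (This is the affine-cone form of the inclusion of the r-th cactus variety of the d-th Veronese embedding of ℙ^n in the locus where the i-th catalecticant matrix has rank at most r.) -/
open MvPolynomial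

noncomputable section

/-- The polynomial ring `S = ℂ[x_0, …, x_n]`. -/
abbrev PolyS (n : ℕ) : Type := MvPolynomial (Fin (n+1)) ℂ

/-- The iterated partial-derivative operator `∂^m` associated to an exponent vector `m`. -/
def monDeriv {n : ℕ} (m : Fin (n+1) →₀ ℕ) : Module.End ℂ (PolyS n) :=
  ((List.finRange (n+1)).map fun i =>
    (((pderiv i).toLinearMap : Module.End ℂ (PolyS n)) ^ (m i))).prod

/-- The contraction `α ⌟ p`: apply to `p` the constant-coefficient differential operator
`α(∂/∂x_0, …, ∂/∂x_n)`. -/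
def contract {n : ℕ} (α p : PolyS n) : PolyS n :=
  α.support.sum fun m => α.coeff m • monDeriv m p

/-- `Ω_p^e = { α ⌟ p : α ∈ S_e }`. -/
def Omega {n : ℕ} (p : PolyS n) (e : ℕ) : Set (PolyS n) :=
  {q | ∃ α ∈ homogeneousSubmodule (Fin (n+1)) ℂ e, q = contract α p}

/-- The `e`-th catalecticant rank `cr_e(p) = dim_ℂ Ω_p^e`. -/
def cr {n : ℕ} (e : ℕ) (p : PolyS n) : ℕ :=
  Module.finrank ℂ (Submodule.span ℂ (Omega p e))

/-- A homogeneous ideal of `S`. -/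
def IsHomogIdeal {n : ℕ} (J : Ideal (PolyS n)) : Prop :=
  ∀ p ∈ J, ∀ e : ℕ, homogeneousComponent e p ∈ J

/-- The graded piece `J ∩ S_e`, as a `ℂ`-subspace of `S`. -/
def gradedPiece {n : ℕ} (J : Ideal (PolyS n)) (e : ℕ) : Submodule ℂ (PolyS n) :=
  (Submodule.restrictScalars ℂ J) ⊓ homogeneousSubmodule (Fin (n+1)) ℂ e

/-- The Hilbert function `h_{S/J}(e) = dim_ℂ S_e − dim_ℂ (J ∩ S_e)`. -/
def hilb {n : ℕ} (J : Ideal (PolyS n)) (e : ℕ) : ℕ :=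
  Module.finrank ℂ (homogeneousSubmodule (Fin (n+1)) ℂ e) -
    Module.finrank ℂ (gradedPiece J e)

/-- The irrelevant maximal ideal `𝔪 = (x_0, …, x_n)`. -/
def irrel (n : ℕ) : Ideal (PolyS n) := Ideal.span (Set.range X)

/-- `J` is saturated: `J = { f : 𝔪^N · f ⊆ J for some N }`. -/
def IsSaturatedIdeal {n : ℕ} (J : Ideal (PolyS n)) : Prop :=
  ∀ f : PolyS n, f ∈ J ↔ ∃ N : ℕ, ∀ g ∈ (irrel n) ^ N, g * f ∈ J

/-- Polynomial functions on a `ℂ`-vector space: the subalgebra of functions generated by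
the linear functionals. -/
def polyFuns (V : Type*) [AddCommGroup V] [Module ℂ V] : Subalgebra ℂ (V → ℂ) :=
  Algebra.adjoin ℂ (Set.range fun f : V →ₗ[ℂ] ℂ => (f : V → ℂ))

/-- The Zariski closure of a set `A` in a `ℂ`-vector space: the common zero locus of all
polynomial functions vanishing identically on `A`. -/
def zClosure {V : Type*} [AddCommGroup V] [Module ℂ V] (A : Set V) : Set V :=
  {p | ∀ F ∈ polyFuns V, (∀ a ∈ A, F a = 0) → F p = 0}

/-- The set `{ ℓ_1^d + ⋯ + ℓ_r^d : ℓ_j ∈ S_1 }` inside `S_d`. -/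
def secantSet (n r d : ℕ) : Set (homogeneousSubmodule (Fin (n+1)) ℂ d) :=
  {q | ∃ ℓ : Fin r → PolyS n, (∀ j, ℓ j ∈ homogeneousSubmodule (Fin (n+1)) ℂ 1) ∧
        (q : PolyS n) = ∑ j, (ℓ j) ^ d}

/-- The ideal generated by all homogeneous elements of `Ann(p)` of degree at most `r`. -/
def lowAnnIdeal {n : ℕ} (p : PolyS n) (r : ℕ) : Ideal (PolyS n) :=
  Ideal.span {α | contract α p = 0 ∧ ∃ e ≤ r, α ∈ homogeneousSubmodule (Fin (n+1)) ℂ e}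


/-!
Contraction makes `S` act on itself by constant-coefficient differential operators, so that
`(β * α) ⌟ p = β ⌟ (α ⌟ p)`, and the apolarity pairing `S_k × S_k → ℂ` is nondegenerate
(`x^m ⌟ x^m = m!`). Hence for `α ∈ J ∩ S_i` with `i ≤ d` and every `β ∈ S_{d-i}` we get
`β ⌟ (α ⌟ p) = (β * α) ⌟ p = 0`, because `β * α ∈ J ∩ S_d`; so `α ⌟ p = 0`. The map
`α ↦ α ⌟ p` on `S_i`, whose image spans `Ω_p^i`, therefore factors through `S_i / (J ∩ S_i)`,
of dimension `h_{S/J}(i) ≤ r`.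
-/

section general

variable {σ R : Type*} [CommSemiring R]

instance module_finite_homogeneousSubmodule [Finite σ] (e : ℕ) :
    Module.Finite R (homogeneousSubmodule σ R e) :=
  Module.Finite.iff_fg.mpr (homogeneousSubmodule_fg _ _ e)

lemma degree_eq_of_mem_homogeneousSubmodule {q : MvPolynomial σ R} {d : ℕ}
    (hq : q ∈ homogeneousSubmodule σ R d) {m : σ →₀ ℕ} (hm : m ∈ q.support) : m.degree = d :=
  (((mem_homogeneousSubmodule _ _).mp hq).degree_eq_sum_deg_support hm).symm

lemma pderiv_pow_apply_monomial (i : σ) (a : ℕ) (s : σ →₀ ℕ) (c : R) :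
    (((pderiv i).toLinearMap : Module.End R (MvPolynomial σ R)) ^ a) (monomial s c)
      = monomial (s - Finsupp.single i a) (c * ((s i).descFactorial a : R)) := by
  induction a generalizing s c with
  | zero => simp
  | succ a ih =>
    rw [pow_succ, Module.End.mul_apply, Derivation.coeFn_coe, pderiv_monomial, ih,
      tsub_tsub, ← Finsupp.single_add, Nat.one_add, Finsupp.tsub_apply, Finsupp.single_eq_same,
      mul_assoc, ← Nat.cast_mul, ← Nat.descFactorial_mul_descFactorial (Nat.le_add_left 1 a),
      Nat.add_sub_cancel, Nat.descFactorial_one, Nat.mul_comm]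

variable [DecidableEq σ]

lemma list_sum_map_single_apply {M : Type*} [AddCommMonoid M] (m : σ →₀ M) {l : List σ}
    (hl : l.Nodup) (j : σ) :
    (l.map fun i => Finsupp.single i (m i)).sum j = if j ∈ l then m j else 0 := by
  induction l with
  | nil => simp
  | cons i t ih =>
    rw [List.nodup_cons] at hl
    rw [List.map_cons, List.sum_cons, Finsupp.add_apply, ih hl.2, Finsupp.single_apply]
    by_cases h : j = i
    · subst h; simp [hl.1]
    · simp [h, Ne.symm h]

lemma list_prod_pderiv_pow_apply_monomial {l : List σ} (hl : l.Nodup) (m m' : σ →₀ ℕ) (c : R) :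
    (l.map fun i => ((pderiv i).toLinearMap : Module.End R (MvPolynomial σ R)) ^ m i).prod
        (monomial m' c)
      = monomial (m' - (l.map fun i => Finsupp.single i (m i)).sum)
          (c * (l.map fun i => ((m' i).descFactorial (m i) : R)).prod) := by
  induction l with
  | nil => simp
  | cons i t ih =>
    rw [List.nodup_cons] at hl
    have hti : (t.map fun j => Finsupp.single j (m j)).sum i = 0 := by
      rw [list_sum_map_single_apply m hl.2, if_neg hl.1]
    rw [List.map_cons, List.prod_cons, Module.End.mul_apply, ih hl.2, pderiv_pow_apply_monomial,
      Finsupp.tsub_apply, hti, Nat.sub_zero, tsub_tsub, List.map_cons, List.sum_cons,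
      List.map_cons, List.prod_cons, add_comm (List.sum _)]
    congr 1
    ring

end general

section apolarity

variable {n : ℕ}

lemma monDeriv_monomial (m m' : Fin (n+1) →₀ ℕ) (c : ℂ) :
    monDeriv m (monomial m' c)
      = monomial (m' - m) (c * ∏ i, ((m' i).descFactorial (m i) : ℂ)) := by
  have hsum : ((List.finRange (n+1)).map fun i => Finsupp.single i (m i)).sum = m := by
    ext j
    rw [list_sum_map_single_apply m (List.nodup_finRange _), if_pos (List.mem_finRange j)]
  rw [monDeriv, list_prod_pderiv_pow_apply_monomial (List.nodup_finRange _), hsum,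
    ← List.ofFn_eq_map, List.prod_ofFn]

lemma prod_descFactorial_eq_zero {m m' : Fin (n+1) →₀ ℕ} (h : ¬ m ≤ m') :
    ∏ i, ((m' i).descFactorial (m i) : ℂ) = 0 := by
  obtain ⟨j, hj⟩ := not_forall.mp (mt Finsupp.le_def.mpr h)
  exact Finset.prod_eq_zero (Finset.mem_univ j)
    (by rw [Nat.descFactorial_eq_zero_iff_lt.mpr (not_le.mp hj), Nat.cast_zero])

lemma monDeriv_add (m m' : Fin (n+1) →₀ ℕ) :
    monDeriv (m + m') = monDeriv m * monDeriv (n := n) m' := by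
  refine LinearMap.ext fun q => ?_
  induction q using MvPolynomial.induction_on' with
  | monomial m'' c =>
    rw [Module.End.mul_apply, monDeriv_monomial, monDeriv_monomial, monDeriv_monomial, tsub_tsub,
      add_comm m', mul_assoc, ← Finset.prod_mul_distrib]
    congr 2
    refine Finset.prod_congr rfl fun i _ => ?_
    rw [Finsupp.add_apply, Finsupp.tsub_apply, ← Nat.cast_mul,
      ← Nat.descFactorial_mul_descFactorial (Nat.le_add_left (m' i) (m i)), Nat.add_sub_cancel,
      Nat.mul_comm]
  | add p q hp hq => rw [map_add, map_add, hp, hq]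

lemma coeff_zero_monDeriv (m : Fin (n+1) →₀ ℕ) (q : PolyS n) :
    coeff 0 (monDeriv m q) = (∏ i, ((m i).factorial : ℂ)) * coeff m q := by
  induction q using MvPolynomial.induction_on' with
  | monomial m' c =>
    rw [monDeriv_monomial, coeff_monomial, coeff_monomial]
    by_cases h : m' = m
    · subst h
      simp [Nat.descFactorial_self, mul_comm]
    · rw [if_neg h, mul_zero]
      split_ifs with hle
      · rw [prod_descFactorial_eq_zero fun h' => h (le_antisymm (tsub_eq_zero_iff_le.mp hle) h'),
          mul_zero]
      · rfl
  | add p q hp hq => rw [map_add, coeff_add, hp, hq, coeff_add, mul_add]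

lemma monDeriv_mem_homogeneousSubmodule {m : Fin (n+1) →₀ ℕ} {q : PolyS n} {d : ℕ}
    (hq : q ∈ homogeneousSubmodule (Fin (n+1)) ℂ d) :
    monDeriv m q ∈ homogeneousSubmodule (Fin (n+1)) ℂ (d - m.degree) := by
  rw [q.as_sum, map_sum]
  refine Submodule.sum_mem _ fun m' hm' => ?_
  rw [monDeriv_monomial]
  by_cases hle : m ≤ m'
  · refine (mem_homogeneousSubmodule _ _).mpr (isHomogeneous_monomial _ ?_)
    rw [← degree_eq_of_mem_homogeneousSubmodule hq hm', ← add_tsub_cancel_of_le hle, map_add,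
      Nat.add_sub_cancel_left, add_tsub_cancel_left]
  · rw [prod_descFactorial_eq_zero hle, mul_zero, map_zero]
    exact Submodule.zero_mem _

lemma contract_eq_sum (α p : PolyS n) :
    contract α p = (AddMonoidAlgebra.coeff α).sum fun m c => c • monDeriv m p :=
  rfl

def contractLinear (p : PolyS n) : PolyS n →ₗ[ℂ] PolyS n where
  toFun α := contract α p
  map_add' a b := by
    simp only [contract_eq_sum]
    exact Finsupp.sum_add_index' (fun m => zero_smul ℂ _) fun m c c' => add_smul c c' _
  map_smul' c a := by
    simp only [contract_eq_sum, AddMonoidAlgebra.coeff_smul, RingHom.id_apply]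
    rw [Finsupp.sum_smul_index fun m => zero_smul ℂ (monDeriv m p), Finsupp.smul_sum]
    simp only [smul_smul]

lemma contractLinear_apply (p α : PolyS n) : contractLinear p α = contract α p := rfl

lemma contract_add_left (α β p : PolyS n) :
    contract (α + β) p = contract α p + contract β p :=
  map_add (contractLinear p) α β

lemma contract_add_right (α p q : PolyS n) :
    contract α (p + q) = contract α p + contract α q := by
  simp only [contract, map_add, smul_add, Finset.sum_add_distrib]

lemma contract_monomial (m : Fin (n+1) →₀ ℕ) (c : ℂ) (p : PolyS n) :
    contract (monomial m c) p = c • monDeriv m p := by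
  rw [contract_eq_sum, ← single_eq_monomial, AddMonoidAlgebra.coeff_single,
    Finsupp.sum_single_index (zero_smul ℂ (monDeriv m p))]

lemma contract_mul (α β p : PolyS n) :
    contract (α * β) p = contract α (contract β p) := by
  induction α using MvPolynomial.induction_on' with
  | add a b ha hb => rw [add_mul, contract_add_left, ha, hb, contract_add_left]
  | monomial m c =>
    induction β using MvPolynomial.induction_on' with
    | add a b ha hb =>
      rw [mul_add, contract_add_left, ha, hb, contract_add_left, contract_add_right]
    | monomial m' c' =>
      rw [monomial_mul, contract_monomial, contract_monomial, contract_monomial, monDeriv_add,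
        Module.End.mul_apply, map_smul, smul_smul]

lemma contract_mem_homogeneousSubmodule {α p : PolyS n} {i d : ℕ}
    (hα : α ∈ homogeneousSubmodule (Fin (n+1)) ℂ i)
    (hp : p ∈ homogeneousSubmodule (Fin (n+1)) ℂ d) :
    contract α p ∈ homogeneousSubmodule (Fin (n+1)) ℂ (d - i) := by
  refine Submodule.sum_mem _ fun m hm => Submodule.smul_mem _ _ ?_
  exact degree_eq_of_mem_homogeneousSubmodule hα hm ▸ monDeriv_mem_homogeneousSubmodule hp

lemma eq_zero_of_forall_contract_eq_zero {q : PolyS n} {k : ℕ}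
    (hq : q ∈ homogeneousSubmodule (Fin (n+1)) ℂ k)
    (h : ∀ β ∈ homogeneousSubmodule (Fin (n+1)) ℂ k, contract β q = 0) : q = 0 := by
  by_contra hq0
  obtain ⟨m, hm⟩ := support_nonempty.mpr hq0
  have hcontract := h _ ((mem_homogeneousSubmodule _ _).mpr
    (isHomogeneous_monomial 1 (degree_eq_of_mem_homogeneousSubmodule hq hm)))
  rw [contract_monomial, one_smul] at hcontract
  have hcoeff := coeff_zero_monDeriv m q
  rw [hcontract, coeff_zero, eq_comm, mul_eq_zero] at hcoeff
  rcases hcoeff with hfact | hcoeff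
  · exact Finset.prod_ne_zero_iff.mpr
      (fun i _ => Nat.cast_ne_zero.mpr (Nat.factorial_ne_zero _)) hfact
  · exact mem_support_iff.mp hm hcoeff

end apolarity

lemma contract_eq_zero_of_mem_gradedPiece {n d i : ℕ} {p α : PolyS n} {J : Ideal (PolyS n)}
    (hp : p ∈ homogeneousSubmodule (Fin (n+1)) ℂ d) (hi : i ≤ d)
    (hann : ∀ α ∈ J, α ∈ homogeneousSubmodule (Fin (n+1)) ℂ d → contract α p = 0)
    (hα : α ∈ gradedPiece J i) : contract α p = 0 := by
  obtain ⟨hαJ, hαi⟩ := hα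
  refine eq_zero_of_forall_contract_eq_zero (contract_mem_homogeneousSubmodule hαi hp)
    fun β hβ => ?_
  rw [← contract_mul]
  refine hann _ (J.mul_mem_left β hαJ) ?_
  simpa only [Nat.sub_add_cancel hi] using
    homogeneousSubmodule_mul _ _ (Submodule.mul_mem_mul hβ hαi)

lemma cr_add_finrank_le {n e : ℕ} {p : PolyS n} {K : Submodule ℂ (PolyS n)}
    (hK : K ≤ homogeneousSubmodule (Fin (n+1)) ℂ e) (hKp : ∀ α ∈ K, contract α p = 0) :
    cr e p + Module.finrank ℂ K ≤ Module.finrank ℂ (homogeneousSubmodule (Fin (n+1)) ℂ e) := by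
  set f := (contractLinear p).domRestrict (homogeneousSubmodule (Fin (n+1)) ℂ e)
  have hspan : Submodule.span ℂ (Omega p e) = LinearMap.range f := by
    rw [LinearMap.range_domRestrict, ← Submodule.span_eq (Submodule.map _ _),
      Submodule.map_coe]
    congr 1
    ext q
    simp only [Omega, Set.mem_ofPred_eq, Set.mem_image, SetLike.mem_coe, contractLinear_apply,
      eq_comm]
  have hker : K.comap (Submodule.subtype _) ≤ LinearMap.ker f := fun α hα => hKp α hα
  rw [cr, hspan, ← LinearMap.finrank_range_add_finrank_ker f,
    ← (Submodule.comapSubtypeEquivOfLe hK).finrank_eq]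
  exact Nat.add_le_add_left (Submodule.finrank_mono hker) _

theorem cactus_subset_catalecticant_general (n d r : ℕ)
    (p : PolyS n) (hp : p ∈ homogeneousSubmodule (Fin (n+1)) ℂ d)
    (J : Ideal (PolyS n)) (hh : ∀ e : ℕ, hilb J e ≤ r)
    (hann : ∀ α ∈ J, α ∈ homogeneousSubmodule (Fin (n+1)) ℂ d → contract α p = 0) :
    ∀ i : ℕ, i ≤ d → cr i p ≤ r := by
  intro i hi
  have hcr := cr_add_finrank_le (K := gradedPiece J i) inf_le_right
    fun α hα => contract_eq_zero_of_mem_gradedPiece hp hi hann hα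
  have hhilb := hh i
  rw [hilb] at hhilb
  omega

/-- If some homogeneous ideal `J` with Hilbert function bounded by `r` has its
degree-`d` part annihilating `p ∈ S_d`, then all catalecticant ranks of `p` are at most `r`. -/
theorem cactus_subset_catalecticant (n d r : ℕ) (hr : 1 ≤ r)
    (p : PolyS n) (hp : p ∈ homogeneousSubmodule (Fin (n+1)) ℂ d)
    (J : Ideal (PolyS n)) (hJ : IsHomogIdeal J) (hh : ∀ e : ℕ, hilb J e ≤ r)
    (hann : ∀ α ∈ J, α ∈ homogeneousSubmodule (Fin (n+1)) ℂ d → contract α p = 0) :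
    ∀ i : ℕ, i ≤ d → cr i p ≤ r :=
  cactus_subset_catalecticant_general n d r p hp J hh hann

end
end

section
/- Let J ⊆ S = ℂ[x_0,…,x_n] be a homogeneous ideal and write h(e) := h_{S/J}(e) for the Hilbert function of S/J. If h(i) ≤ i for some integer i ≥ 1, then h(i+1) ≤ h(i). (Special case of Macaulay's bound on the growth of Hilbert functions of standard graded algebras.) -/
/-!
Fix a monomial order. A subspace of polynomials has as many distinct leading monomials as its
dimension, so `h(e)` counts the *standard* monomials of degree `e`: those that are not the
leading monomial of any element of `J ∩ S_e`. Since `x^k f` has leading monomial `x^k · lm(f)`,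
the standard monomials form an order ideal `O`, and it suffices to show `|O_{i+1}| ≤ |O_i|`
whenever `|O_i| ≤ i`. This goes by induction on `i` and on the set of variables: `O_{i+1}`
splits into its `x_j`-free part and `x_j · Q_i`, where `Q = O : x_j`. If `|Q_i| ≤ i`, neither
piece grows, by induction; otherwise the `x_j`-free part of `O` is empty from degree `i + 1` on,
and `O_{i+2} = x_j · Q_{i+1}` with `Q_{i+1} ⊆ O_{i+1}`.
-/

open MvPolynomial

noncomputable section

section OrderIdeal

open Finsupp

variable {σ : Type*}

def degreeLevel (O : Set (σ →₀ ℕ)) (e : ℕ) : Set (σ →₀ ℕ) := {d ∈ O | d.degree = e}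

lemma degreeLevel_finite [Finite σ] (O : Set (σ →₀ ℕ)) (e : ℕ) : (degreeLevel O e).Finite :=
  (finite_of_degree_le e).subset fun _ hd => hd.2.le

lemma degreeLevel_mono {O O' : Set (σ →₀ ℕ)} (h : O ⊆ O') (e : ℕ) :
    degreeLevel O e ⊆ degreeLevel O' e :=
  fun _ hd => ⟨h hd.1, hd.2⟩

lemma exists_single_le_of_degree_ne_zero {d : σ →₀ ℕ} (hd : d.degree ≠ 0) :
    ∃ j, single j 1 ≤ d := by
  obtain ⟨j, hj⟩ : ∃ j, d j ≠ 0 := by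
    by_contra! h
    exact hd ((degree_eq_zero_iff d).mpr (Finsupp.ext h))
  exact ⟨j, single_le_iff.mpr (Nat.one_le_iff_ne_zero.mpr hj)⟩

lemma IsLowerSet.degreeLevel_succ_eq_empty {O : Set (σ →₀ ℕ)} (hO : IsLowerSet O) {e : ℕ}
    (h : degreeLevel O e = ∅) : degreeLevel O (e + 1) = ∅ := by
  refine Set.eq_empty_of_forall_notMem fun d ⟨hdO, hde⟩ => ?_
  obtain ⟨j, hj⟩ := exists_single_le_of_degree_ne_zero (d := d) (by omega)
  have hsplit : d - single j 1 + single j 1 = d := tsub_add_cancel_of_le hj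
  have hdeg : (d - single j 1).degree = e := by
    rw [← hsplit, map_add, degree_single] at hde
    omega
  exact h.subset ⟨hO tsub_le_self hdO, hdeg⟩

lemma ncard_degreeLevel_succ_eq_add [Finite σ] (O : Set (σ →₀ ℕ)) (j : σ) (e : ℕ) :
    (degreeLevel O (e + 1)).ncard =
      (degreeLevel (O ∩ {d | d j = 0}) (e + 1)).ncard +
        (degreeLevel ((· + single j 1) ⁻¹' O) e).ncard := by
  have hsplit : degreeLevel O (e + 1) =
      degreeLevel (O ∩ {d | d j = 0}) (e + 1) ∪
        (· + single j 1) '' degreeLevel ((· + single j 1) ⁻¹' O) e := by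
    ext d
    constructor
    · rintro ⟨hdO, hde⟩
      by_cases hj : d j = 0
      · exact Or.inl ⟨⟨hdO, hj⟩, hde⟩
      · have hle : single j 1 ≤ d := single_le_iff.mpr (Nat.one_le_iff_ne_zero.mpr hj)
        have hadd : d - single j 1 + single j 1 = d := tsub_add_cancel_of_le hle
        refine Or.inr ⟨d - single j 1, ⟨by simpa [hadd] using hdO, ?_⟩, hadd⟩
        rw [← hadd, map_add, degree_single] at hde
        omega
    · rintro (⟨⟨hdO, -⟩, hde⟩ | ⟨d, ⟨hdO, hde⟩, rfl⟩)
      · exact ⟨hdO, hde⟩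
      · exact ⟨hdO, by rw [map_add, degree_single, hde]⟩
  have hdisj : Disjoint (degreeLevel (O ∩ {d | d j = 0}) (e + 1))
      ((· + single j 1) '' degreeLevel ((· + single j 1) ⁻¹' O) e) := by
    rw [Set.disjoint_left]
    rintro _ ⟨⟨-, hj⟩, -⟩ ⟨d, -, rfl⟩
    simp at hj
  rw [hsplit, Set.ncard_union_eq hdisj (degreeLevel_finite _ _)
    ((degreeLevel_finite _ _).image _), Set.ncard_image_of_injective _ (add_left_injective _)]

lemma IsLowerSet.ncard_degreeLevel_succ_le_of_support_subset [Finite σ] [DecidableEq σ]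
    (i : ℕ) (V : Finset σ) {O : Set (σ →₀ ℕ)} (hO : IsLowerSet O)
    (hV : ∀ d ∈ O, d.support ⊆ V) (h : (degreeLevel O i).ncard ≤ i) :
    (degreeLevel O (i + 1)).ncard ≤ (degreeLevel O i).ncard := by
  induction i generalizing V O with
  | zero =>
    have h0 : degreeLevel O 0 = ∅ :=
      (Set.ncard_eq_zero (degreeLevel_finite O 0)).mp (Nat.le_zero.mp h)
    simp [hO.degreeLevel_succ_eq_empty h0]
  | succ i IH =>
    induction V using Finset.induction_on generalizing O with
    | empty =>
      have hempty : degreeLevel O (i + 1 + 1) = ∅ := by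
        refine Set.eq_empty_of_forall_notMem fun d ⟨hdO, hde⟩ => ?_
        have hd0 : d = 0 := support_eq_empty.mp (Finset.subset_empty.mp (hV d hdO))
        simp [hd0] at hde
      simp [hempty]
    | @insert j V₀ hj IHV =>
      have split_i := ncard_degreeLevel_succ_eq_add O j i
      have split_succ := ncard_degreeLevel_succ_eq_add O j (i + 1)
      set O₀ := O ∩ {d | d j = 0}
      set Q := (· + single j 1) ⁻¹' O
      have hO₀ : IsLowerSet O₀ :=
        hO.inter fun a b hba ha => Nat.eq_zero_of_le_zero (ha ▸ hba j)
      have hQ : IsLowerSet Q := hO.preimage fun _ _ hab => add_le_add_left hab _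
      have hV₀ : ∀ d ∈ O₀, d.support ⊆ V₀ := fun d hd =>
        (Finset.subset_insert_iff_of_notMem (by simpa using hd.2)).mp (hV d hd.1)
      have hVQ : ∀ d ∈ Q, d.support ⊆ insert j V₀ := fun d hd =>
        (support_mono le_self_add).trans (hV _ hd)
      by_cases hQi : (degreeLevel Q i).ncard ≤ i
      · have hQ_le := IH (insert j V₀) hQ hVQ hQi
        have hO₀_bound : (degreeLevel O₀ (i + 1)).ncard ≤ i + 1 :=
          (Set.ncard_le_ncard (degreeLevel_mono Set.inter_subset_left _)
            (degreeLevel_finite _ _)).trans h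
        have hO₀_le := IHV hO₀ hV₀ hO₀_bound
        omega
      · have hO₀_empty : degreeLevel O₀ (i + 1) = ∅ :=
          (Set.ncard_eq_zero (degreeLevel_finite _ _)).mp (by omega)
        rw [hO₀.degreeLevel_succ_eq_empty hO₀_empty, Set.ncard_empty, zero_add] at split_succ
        have hQ_le : (degreeLevel Q (i + 1)).ncard ≤ (degreeLevel O (i + 1)).ncard :=
          Set.ncard_le_ncard (degreeLevel_mono (fun d hd => hO le_self_add hd) _)
            (degreeLevel_finite _ _)
        omega

theorem IsLowerSet.ncard_degreeLevel_succ_le [Finite σ] {O : Set (σ →₀ ℕ)} (hO : IsLowerSet O)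
    {i : ℕ} (h : (degreeLevel O i).ncard ≤ i) :
    (degreeLevel O (i + 1)).ncard ≤ (degreeLevel O i).ncard := by
  classical
  have := Fintype.ofFinite σ
  exact hO.ncard_degreeLevel_succ_le_of_support_subset i Finset.univ
    (fun d _ => Finset.subset_univ _) h

end OrderIdeal

namespace MonomialOrder

variable {σ : Type*} (m : MonomialOrder σ)

theorem linearIndependent_of_injective_degree {R : Type*} [CommRing R] [NoZeroDivisors R]
    {ι : Type*} {f : ι → MvPolynomial σ R} (hf : ∀ i, f i ≠ 0)
    (hinj : Function.Injective (m.degree ∘ f)) : LinearIndependent R f := by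
  classical
  rw [linearIndependent_iff']
  intro s
  induction s using Finset.induction_on_max_value (m.toSyn ∘ m.degree ∘ f) with
  | empty => simp
  | insert a s has hmax IH =>
    intro g hg
    have hcoeff : ∀ x ∈ s, (f x).coeff (m.degree (f a)) = 0 := fun x hx =>
      m.coeff_eq_zero_of_lt <| (hmax x hx).lt_of_ne fun h =>
        has (hinj (m.toSyn.injective h) ▸ hx)
    have hga : g a = 0 := by
      have := congrArg (coeff (m.degree (f a))) hg
      rw [Finset.sum_insert has, coeff_add, coeff_sum,
        Finset.sum_eq_zero fun x hx => by rw [coeff_smul, hcoeff x hx, smul_zero], add_zero,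
        coeff_smul, coeff_zero, smul_eq_mul] at this
      exact (mul_eq_zero.mp this).resolve_right (m.coeff_degree_ne_zero_iff.mpr (hf a))
    rw [Finset.sum_insert has, hga, zero_smul, zero_add] at hg
    intro i hi
    rcases Finset.mem_insert.mp hi with rfl | hi
    · exact hga
    · exact IH g hg i hi

variable {K : Type*} [Field K]

def leadingMonomials (V : Submodule K (MvPolynomial σ K)) : Set (σ →₀ ℕ) :=
  {d | ∃ f ∈ V, f ≠ 0 ∧ m.degree f = d}

theorem leadingMonomials_mono {V W : Submodule K (MvPolynomial σ K)} (h : V ≤ W) :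
    m.leadingMonomials V ⊆ m.leadingMonomials W :=
  fun _ ⟨f, hfV, hf0, hfd⟩ => ⟨f, h hfV, hf0, hfd⟩

theorem finrank_eq_ncard_leadingMonomials (V : Submodule K (MvPolynomial σ K)) :
    Module.finrank K V = (m.leadingMonomials V).ncard := by
  set D := m.leadingMonomials V
  choose F hFV hF0 hFd using fun d : D => d.2
  have hli : LinearIndependent K fun d : D => (⟨F d, hFV d⟩ : V) :=
    .of_comp V.subtype <| m.linearIndependent_of_injective_degree hF0 fun d d' h =>
      Subtype.ext ((hFd d).symm.trans (h.trans (hFd d')))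
  by_cases hD : D.Finite
  · have := hD.fintype
    let coeffs : V →ₗ[K] D → K := LinearMap.pi fun d => (lcoeff K d.1).comp V.subtype
    have hinj : Function.Injective coeffs := by
      rw [← LinearMap.ker_eq_bot, Submodule.eq_bot_iff]
      intro f hf
      by_contra hf0
      have hfD : m.degree f.1 ∈ D := ⟨f, f.2, fun h => hf0 (Subtype.ext h), rfl⟩
      exact m.coeff_degree_ne_zero_iff.mpr (fun h => hf0 (Subtype.ext h))
        (congrFun (LinearMap.mem_ker.mp hf) ⟨_, hfD⟩)
    have := Module.Finite.of_injective coeffs hinj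
    rw [← Nat.card_coe_set_eq, Nat.card_eq_fintype_card]
    refine le_antisymm ?_ hli.fintype_card_le_finrank
    simpa using LinearMap.finrank_le_finrank_of_injective hinj
  · have := Set.infinite_coe_iff.mpr hD
    rw [Set.Infinite.ncard hD, Module.finrank_of_not_finite]
    intro _
    exact Module.Finite.not_linearIndependent_of_infinite _ hli

theorem leadingMonomials_homogeneousSubmodule (e : ℕ) :
    m.leadingMonomials (homogeneousSubmodule σ K e) = {d | d.degree = e} := by
  classical
  ext d
  constructor
  · rintro ⟨f, hf, hf0, rfl⟩
    rw [Set.mem_ofPred_eq, Finsupp.degree_eq_weight_one]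
    exact (mem_homogeneousSubmodule e f).mp hf (m.coeff_degree_ne_zero_iff.mpr hf0)
  · intro hd
    exact ⟨monomial d 1, (mem_homogeneousSubmodule e _).mpr (isHomogeneous_monomial 1 hd),
      by simp, by simp [m.degree_monomial]⟩

end MonomialOrder

section HilbertFunction

variable {n : ℕ} (m : MonomialOrder (Fin (n + 1))) (J : Ideal (PolyS n))

def standardMonomials : Set (Fin (n + 1) →₀ ℕ) :=
  {d | d ∉ m.leadingMonomials (gradedPiece J d.degree)}

theorem degreeLevel_standardMonomials (e : ℕ) :
    degreeLevel (standardMonomials m J) e =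
      {d | d.degree = e} \ m.leadingMonomials (gradedPiece J e) := by
  ext d
  constructor
  · rintro ⟨hd, rfl⟩
    exact ⟨rfl, hd⟩
  · rintro ⟨rfl, hd⟩
    exact ⟨hd, rfl⟩

theorem hilb_eq_ncard_degreeLevel_standardMonomials (e : ℕ) :
    hilb J e = (degreeLevel (standardMonomials m J) e).ncard := by
  have hsub : m.leadingMonomials (gradedPiece J e) ⊆ {d | d.degree = e} :=
    m.leadingMonomials_homogeneousSubmodule (K := ℂ) e ▸ m.leadingMonomials_mono inf_le_right
  rw [hilb, m.finrank_eq_ncard_leadingMonomials, m.finrank_eq_ncard_leadingMonomials,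
    m.leadingMonomials_homogeneousSubmodule, degreeLevel_standardMonomials,
    Set.ncard_sdiff hsub (((Finsupp.finite_of_degree_le e).subset fun _ hd => hd.le).subset hsub)]

theorem isLowerSet_standardMonomials : IsLowerSet (standardMonomials m J) := by
  intro a b hba ha hb
  obtain ⟨f, ⟨hfJ, hf_homog⟩, hf0, rfl⟩ := hb
  obtain ⟨k, rfl⟩ := le_iff_exists_add'.mp hba
  refine ha ⟨monomial k 1 * f, ⟨J.mul_mem_left _ hfJ, ?_⟩, ?_, ?_⟩
  · rw [SetLike.mem_coe, mem_homogeneousSubmodule, map_add]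
    exact (isHomogeneous_monomial 1 rfl).mul hf_homog
  · exact mul_ne_zero (by simp) hf0
  · rw [m.degree_mul (by simp) hf0, m.degree_monomial, if_neg one_ne_zero]

end HilbertFunction

theorem macaulay_bound_special_general (n : ℕ) (J : Ideal (PolyS n))
    (i : ℕ) (h : hilb J i ≤ i) :
    hilb J (i + 1) ≤ hilb J i := by
  simp only [hilb_eq_ncard_degreeLevel_standardMonomials MonomialOrder.lex J] at h ⊢
  exact (isLowerSet_standardMonomials _ J).ncard_degreeLevel_succ_le h

/-- Macaulay bound, special case: if `h_{S/J}(i) ≤ i` for some `i ≥ 1`, then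
`h_{S/J}(i+1) ≤ h_{S/J}(i)`. -/
theorem macaulay_bound_special (n : ℕ) (J : Ideal (PolyS n)) (hJ : IsHomogIdeal J)
    (i : ℕ) (hi : 1 ≤ i) (h : hilb J i ≤ i) :
    hilb J (i + 1) ≤ hilb J i :=
  macaulay_bound_special_general n J i h
end
end

section
/- Let p ∈ S_d be a homogeneous polynomial of degree d in x_0,…,x_n over ℂ, and suppose cr_i(p) ≤ i for some integer i with 1 ≤ i ≤ d. Then the catalecticant ranks of p are non-increasing from degree i on: cr_{j+1}(p) ≤ cr_j(p) for every j with i ≤ j ≤ d−1. -/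
open MvPolynomial

noncomputable section

/-!
Let `I ⊆ S` be the annihilator of `p` under contraction. Since `(x_j α) ⌟ p = ∂_j (α ⌟ p)`,
`I` is stable under multiplication by the variables, and `cr_e(p) = dim S_e - dim I_e`.
Leading exponents for a monomial order preserve the dimension of a subspace of `S_e`, so
`cr_e(p)` is the number of *standard* exponents of degree `e`: those that are not leading
exponents of `I_e`. Stability of `I` makes the standard exponents closed under lowering one
entry, so those of degree `e + 1` have all their lower neighbours among those of degree `e`.
It remains to see (a Macaulay bound in low degree) that a set `A` of exponents, all of degree
at least `#A`, has at least `#A` lower neighbours: split `A` according to whether `x_i` divides,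
for a variable `x_i` occurring in `A`, and induct. Hence `cr_e(p) ≤ e` gives
`cr_{e+1}(p) ≤ cr_e(p) ≤ e + 1`, and the hypothesis propagates to all `j ≥ i`.
-/

theorem List.prod_map_pow_add {ι M : Type*} [Monoid M] {f : ι → M}
    (hf : _root_.Pairwise fun i j => Commute (f i) (f j)) (a b : ι → ℕ) :
    ∀ l : List ι, (l.map fun k => f k ^ (a k + b k)).prod =
      (l.map fun k => f k ^ a k).prod * (l.map fun k => f k ^ b k).prod
  | [] => by simp
  | k :: l => by
    have hcomm : Commute (f k ^ b k) (l.map fun k => f k ^ a k).prod := by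
      refine Commute.list_prod_right _ _ fun x hx => ?_
      obtain ⟨k', -, rfl⟩ := List.mem_map.mp hx
      rcases eq_or_ne k k' with rfl | hk
      · exact Commute.pow_pow_self _ _ _
      · exact ((hf hk).pow_left _).pow_right _
    rw [List.map_cons, List.prod_cons, List.prod_map_pow_add hf a b l, pow_add]
    simp only [List.map_cons, List.prod_cons, mul_assoc]
    rw [← mul_assoc (f k ^ b k), hcomm.eq, mul_assoc]

theorem Submodule.finrank_map_add_finrank_inf_ker {K V V₂ : Type*} [DivisionRing K]
    [AddCommGroup V] [Module K V] [AddCommGroup V₂] [Module K V₂] (W : Submodule K V)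
    [FiniteDimensional K W] (f : V →ₗ[K] V₂) :
    Module.finrank K (W.map f) + Module.finrank K ↥(W ⊓ LinearMap.ker f) = Module.finrank K W := by
  rw [← (f.domRestrict W).finrank_range_add_finrank_ker, LinearMap.range_domRestrict,
    LinearMap.ker_domRestrict, (equivSubtypeMap W _).finrank_eq, map_comap_subtype]

theorem Finset.mem_finsuppAntidiag_univ {σ : Type*} [Fintype σ] [DecidableEq σ] {e : ℕ}
    {μ : σ →₀ ℕ} : μ ∈ finsuppAntidiag univ e ↔ μ.degree = e := by
  simp [mem_finsuppAntidiag, Finsupp.degree_eq_sum]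

theorem MvPolynomial.homogeneousSubmodule_eq_restrictSupport {σ K : Type*} [CommSemiring K]
    [Fintype σ] [DecidableEq σ] (e : ℕ) :
    homogeneousSubmodule σ K e =
      restrictSupport K ((Finset.finsuppAntidiag Finset.univ e : Finset (σ →₀ ℕ)) : Set _) := by
  rw [homogeneousSubmodule_eq_finsupp_supported]
  congr 1
  ext μ
  exact Finset.mem_finsuppAntidiag_univ.symm

namespace MvPolynomial

variable {R σ : Type*} [CommRing R]

theorem pderiv_pderiv_comm (i j : σ) (f : MvPolynomial σ R) :
    pderiv i (pderiv j f) = pderiv j (pderiv i f) := by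
  classical
  suffices h : ⁅pderiv i, pderiv j⁆ = (0 : Derivation R (MvPolynomial σ R) (MvPolynomial σ R)) by
    rw [← sub_eq_zero, ← Derivation.commutator_apply, h, Derivation.zero_apply]
  refine derivation_ext fun k => ?_
  simp [Derivation.commutator_apply, pderiv_X, Pi.single_apply, apply_ite]

theorem commute_pderiv (i j : σ) :
    Commute ((pderiv i).toLinearMap : Module.End R (MvPolynomial σ R)) (pderiv j).toLinearMap :=
  LinearMap.ext (pderiv_pderiv_comm i j)

end MvPolynomial

section LowerShadow

open Finset Finsupp

variable {σ : Type*} {A B : Finset (σ →₀ ℕ)} {i : σ} {μ ν : σ →₀ ℕ}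

theorem Finsupp.sub_single_one_add_single_one (h : μ i ≠ 0) :
    μ - single i 1 + single i 1 = μ :=
  tsub_add_cancel_of_le (single_le_iff.mpr (Nat.one_le_iff_ne_zero.mpr h))

def colonVar (A : Finset (σ →₀ ℕ)) (i : σ) : Finset (σ →₀ ℕ) :=
  A.preimage (· + single i 1) (add_left_injective _).injOn

@[simp]
theorem mem_colonVar : ν ∈ colonVar A i ↔ ν + single i 1 ∈ A :=
  mem_preimage

theorem card_filter_eq_zero_add_card_colonVar (A : Finset (σ →₀ ℕ)) (i : σ) :
    #{μ ∈ A | μ i = 0} + #(colonVar A i) = #A := by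
  classical
  have hrange : ∀ μ : σ →₀ ℕ, μ ∈ Set.range (· + single i 1) ↔ ¬ μ i = 0 := by
    intro μ
    constructor
    · rintro ⟨ν, rfl⟩; simp
    · intro h; exact ⟨μ - single i 1, sub_single_one_add_single_one h⟩
  rw [colonVar, card_preimage, filter_congr fun μ _ => hrange μ]
  exact card_filter_add_card_filter_not _

variable [DecidableEq σ]

def lowerShadow (A : Finset (σ →₀ ℕ)) : Finset (σ →₀ ℕ) :=
  A.biUnion fun μ => μ.support.image fun i => μ - single i 1

theorem mem_lowerShadow : ν ∈ lowerShadow A ↔ ∃ i, ν + single i 1 ∈ A := by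
  simp only [lowerShadow, mem_biUnion, mem_image, Finsupp.mem_support_iff]
  constructor
  · rintro ⟨μ, hμ, i, hi, rfl⟩
    exact ⟨i, by rwa [sub_single_one_add_single_one hi]⟩
  · rintro ⟨i, hi⟩
    exact ⟨_, hi, i, by simp, by simp⟩

theorem lowerShadow_mono (h : A ⊆ B) : lowerShadow A ⊆ lowerShadow B :=
  biUnion_subset_biUnion_of_subset_left _ h

theorem colonVar_subset_lowerShadow : colonVar A i ⊆ lowerShadow A :=
  fun _ hν => mem_lowerShadow.mpr ⟨i, mem_colonVar.mp hν⟩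

theorem lowerShadow_colonVar : lowerShadow (colonVar A i) = colonVar (lowerShadow A) i := by
  ext ν
  simp only [mem_lowerShadow, mem_colonVar, add_right_comm ν]

theorem lowerShadow_filter_eq_zero_subset :
    lowerShadow {μ ∈ A | μ i = 0} ⊆ {ν ∈ lowerShadow A | ν i = 0} := by
  intro ν hν
  obtain ⟨j, hj⟩ := mem_lowerShadow.mp hν
  rw [mem_filter] at hj ⊢
  refine ⟨mem_lowerShadow.mpr ⟨j, hj.1⟩, ?_⟩
  have := hj.2
  simp only [Finsupp.coe_add, Pi.add_apply] at this
  omega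

theorem card_le_card_lowerShadow (A : Finset (σ →₀ ℕ)) (hA : ∀ μ ∈ A, #A ≤ μ.degree) :
    #A ≤ #(lowerShadow A) := by
  induction hc : #A using Nat.strong_induction_on generalizing A with
  | _ c ih =>
  subst hc
  obtain rfl | ⟨μ₀, hμ₀⟩ := A.eq_empty_or_nonempty
  · simp
  obtain ⟨i, hi⟩ : ∃ i, μ₀ i ≠ 0 := by
    by_contra! h
    have := hA μ₀ hμ₀
    rw [show μ₀ = 0 from Finsupp.ext h, map_zero] at this
    exact (card_pos.mpr ⟨μ₀, hμ₀⟩).ne' (Nat.le_zero.mp this)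
  set A₀ := {μ ∈ A | μ i = 0}
  set B := colonVar A i
  have hsplit : #A₀ + #B = #A := card_filter_eq_zero_add_card_colonVar A i
  have hB : B.Nonempty :=
    ⟨μ₀ - single i 1, mem_colonVar.mpr ((sub_single_one_add_single_one hi).symm ▸ hμ₀)⟩
  obtain hA₀ | hA₀ := A₀.eq_empty_or_nonempty
  · calc #A = #B := by rw [← hsplit, hA₀, card_empty, zero_add]
      _ ≤ #(lowerShadow A) := card_le_card colonVar_subset_lowerShadow
  have hA₀ih : #A₀ ≤ #(lowerShadow A₀) :=
    ih _ (by have := hB.card_pos; omega) A₀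
      (fun μ hμ => (by omega : #A₀ ≤ #A).trans (hA μ (mem_filter.mp hμ).1)) rfl
  have hBih : #B ≤ #(lowerShadow B) := by
    refine ih _ (by have := hA₀.card_pos; omega) B (fun ν hν => ?_) rfl
    have := hA _ (mem_colonVar.mp hν)
    rw [map_add, degree_single] at this
    have := hA₀.card_pos
    omega
  calc #A = #A₀ + #B := hsplit.symm
    _ ≤ #(lowerShadow A₀) + #(lowerShadow B) := add_le_add hA₀ih hBih
    _ ≤ #{ν ∈ lowerShadow A | ν i = 0} + #(colonVar (lowerShadow A) i) := by
      rw [← lowerShadow_colonVar (A := A)]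
      exact add_le_add (card_le_card lowerShadow_filter_eq_zero_subset) le_rfl
    _ = #(lowerShadow A) := card_filter_eq_zero_add_card_colonVar _ i

theorem card_le_of_lowerShadow_subset {A N : Finset (σ →₀ ℕ)} (hA : ∀ μ ∈ A, #N < μ.degree)
    (hAN : lowerShadow A ⊆ N) : #A ≤ #N := by
  by_contra! hlt
  obtain ⟨T, hTA, hT⟩ := exists_subset_card_eq (show #N + 1 ≤ #A from hlt)
  have := card_le_card_lowerShadow T fun μ hμ => hT ▸ hA μ (hTA hμ)
  have := card_le_card ((lowerShadow_mono hTA).trans hAN)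
  omega

end LowerShadow

namespace MonomialOrder

open Finset MvPolynomial

variable {σ K : Type*} [Field K] (ord : MonomialOrder σ)

theorem linearIndepOn_of_injOn_degree {ι : Type*} {f : ι → MvPolynomial σ K} {s : Finset ι}
    (hf : ∀ i ∈ s, f i ≠ 0) (hinj : Set.InjOn (fun i => ord.degree (f i)) s) :
    LinearIndepOn K f (s : Set ι) := by
  classical
  induction s using Finset.induction_on_max_value (fun i => ord.toSyn (ord.degree (f i))) with
  | empty => simp
  | insert a s has hmax ih =>
    rw [coe_insert, linearIndepOn_insert (by exact_mod_cast has)]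
    refine ⟨ih (fun i hi => hf i (mem_insert_of_mem hi))
      (hinj.mono (by simp [Set.subset_insert])), fun hspan => ?_⟩
    have hlower : Submodule.span K (f '' s) ≤ LinearMap.ker (lcoeff K (ord.degree (f a))) := by
      refine Submodule.span_le.mpr ?_
      rintro _ ⟨x, hx, rfl⟩
      have hxa : ord.degree (f x) ≠ ord.degree (f a) := fun h =>
        has (hinj (by simp [hx]) (by simp) h ▸ hx)
      exact ord.coeff_eq_zero_of_lt (lt_of_le_of_ne (hmax x hx) (ord.toSyn.injective.ne hxa))
    exact (ord.coeff_degree_ne_zero_iff.mpr (hf a (mem_insert_self a s))) (hlower hspan)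

open Classical in
def leadingExps (W : Submodule K (MvPolynomial σ K)) (s : Finset (σ →₀ ℕ)) :
    Finset (σ →₀ ℕ) :=
  {μ ∈ s | ∃ f ∈ W, f ≠ 0 ∧ ord.degree f = μ}

theorem mem_leadingExps {W : Submodule K (MvPolynomial σ K)} {s : Finset (σ →₀ ℕ)}
    {μ : σ →₀ ℕ} : μ ∈ ord.leadingExps W s ↔ μ ∈ s ∧ ∃ f ∈ W, f ≠ 0 ∧ ord.degree f = μ := by
  classical
  simp [leadingExps]

theorem leadingExps_subset (W : Submodule K (MvPolynomial σ K)) (s : Finset (σ →₀ ℕ)) :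
    ord.leadingExps W s ⊆ s := by
  classical
  exact filter_subset _ _

theorem finrank_eq_card_leadingExps {W : Submodule K (MvPolynomial σ K)} {s : Finset (σ →₀ ℕ)}
    (hW : W ≤ restrictSupport K ↑s) : Module.finrank K W = #(ord.leadingExps W s) := by
  classical
  set T := ord.leadingExps W s
  let coeffs : W →ₗ[K] (T → K) := LinearMap.pi fun μ => (lcoeff K (μ : σ →₀ ℕ)).comp W.subtype
  have hcoeffs : Function.Injective coeffs := by
    rw [← LinearMap.ker_eq_bot, LinearMap.ker_eq_bot']
    intro f hf
    by_contra hf0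
    have hf0' : (f : MvPolynomial σ K) ≠ 0 := by simpa using hf0
    have hT : ord.degree (f : MvPolynomial σ K) ∈ T := (ord.mem_leadingExps).mpr
      ⟨hW f.2 (ord.degree_mem_support hf0'), f, f.2, hf0', rfl⟩
    exact ord.coeff_degree_ne_zero_iff.mpr hf0' (congrFun hf ⟨_, hT⟩)
  have : FiniteDimensional K W := Module.Finite.of_injective coeffs hcoeffs
  refine le_antisymm ?_ ?_
  · simpa using LinearMap.finrank_le_finrank_of_injective hcoeffs
  · have hrep : ∀ μ : T, ∃ f ∈ W, f ≠ 0 ∧ ord.degree f = μ :=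
      fun μ => ((ord.mem_leadingExps).mp μ.2).2
    choose F hFW hF0 hFdeg using hrep
    have hli : LinearIndependent K fun μ => (⟨F μ, hFW μ⟩ : W) := by
      refine LinearIndependent.of_comp W.subtype ?_
      have := ord.linearIndepOn_of_injOn_degree (f := F) (s := univ) (fun μ _ => hF0 μ)
        (fun μ _ ν _ h => Subtype.ext (by simpa [hFdeg] using h))
      rwa [coe_univ, linearIndepOn_univ_iff] at this
    simpa using hli.fintype_card_le_finrank

theorem card_sdiff_leadingExps [DecidableEq σ] {W : Submodule K (MvPolynomial σ K)}
    {s : Finset (σ →₀ ℕ)} (hW : W ≤ restrictSupport K ↑s) :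
    #(s \ ord.leadingExps W s) =
      Module.finrank K (restrictSupport K (↑s : Set (σ →₀ ℕ))) - Module.finrank K W := by
  rw [card_sdiff_of_subset (ord.leadingExps_subset W s), ord.finrank_eq_card_leadingExps hW,
    Module.finrank_eq_nat_card_basis (basisRestrictSupport K _), Nat.card_coe_set_eq,
    Set.ncard_coe_finset]

theorem lowerShadow_sdiff_leadingExps_subset [DecidableEq σ]
    {W V : Submodule K (MvPolynomial σ K)} {s t : Finset (σ →₀ ℕ)} (hWV : ∀ f ∈ W, ∀ j, X j * f ∈ V)
    (hst : ∀ ν j, ν + Finsupp.single j 1 ∈ t → ν ∈ s) :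
    lowerShadow (t \ ord.leadingExps V t) ⊆ s \ ord.leadingExps W s := by
  intro ν hν
  obtain ⟨j, hj⟩ := mem_lowerShadow.mp hν
  rw [mem_sdiff] at hj ⊢
  refine ⟨hst ν j hj.1, fun hlead => hj.2 ?_⟩
  obtain ⟨-, f, hfW, hf0, rfl⟩ := ord.mem_leadingExps.mp hlead
  refine ord.mem_leadingExps.mpr ⟨hj.1, X j * f, hWV f hfW j, mul_ne_zero (X_ne_zero j) hf0, ?_⟩
  rw [ord.degree_mul (X_ne_zero j) hf0, ord.degree_X, add_comm]

end MonomialOrder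

namespace Catalecticant

open Finset MvPolynomial

variable {n : ℕ}

theorem monDeriv_add (m m' : Fin (n+1) →₀ ℕ) : monDeriv (m + m') = monDeriv m * monDeriv m' :=
  List.prod_map_pow_add (fun i j _ => commute_pderiv i j) m m' _

theorem monDeriv_single (i : Fin (n+1)) :
    monDeriv (Finsupp.single i 1) = (pderiv i).toLinearMap := by
  classical
  rw [monDeriv, List.prod_map_eq_pow_single i,
    List.count_eq_one_of_mem (List.nodup_finRange _) (List.mem_finRange i)]
  · simp
  · intro j hj _; simp [Finsupp.single_eq_of_ne hj]

def contractLinearMap (p : PolyS n) : PolyS n →ₗ[ℂ] PolyS n :=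
  (basisMonomials (Fin (n+1)) ℂ).constr ℂ fun m => monDeriv m p

theorem contractLinearMap_apply (p α : PolyS n) : contractLinearMap p α = contract α p := by
  rw [contractLinearMap, Module.Basis.constr_apply]; rfl

theorem contractLinearMap_monomial (p : PolyS n) (m : Fin (n+1) →₀ ℕ) (c : ℂ) :
    contractLinearMap p (monomial m c) = c • monDeriv m p := by
  rw [← mul_one c, ← smul_eq_mul, ← smul_monomial, map_smul, smul_eq_mul, mul_one]
  exact congr_arg (c • ·) ((basisMonomials _ ℂ).constr_basis ℂ _ m)

theorem contractLinearMap_X_mul (p α : PolyS n) (i : Fin (n+1)) :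
    contractLinearMap p (X i * α) = pderiv i (contractLinearMap p α) := by
  induction α using MvPolynomial.induction_on' with
  | add α β hα hβ => rw [mul_add, map_add, map_add, hα, hβ, map_add]
  | monomial m c =>
    rw [X, monomial_mul, one_mul, contractLinearMap_monomial, contractLinearMap_monomial,
      Derivation.map_smul, monDeriv_add, monDeriv_single]
    rfl

def annihilatorIn (p : PolyS n) (e : ℕ) : Submodule ℂ (PolyS n) :=
  homogeneousSubmodule (Fin (n+1)) ℂ e ⊓ LinearMap.ker (contractLinearMap p)

theorem X_mul_mem_annihilatorIn {p α : PolyS n} {e : ℕ} (hα : α ∈ annihilatorIn p e)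
    (i : Fin (n+1)) : X i * α ∈ annihilatorIn p (e + 1) := by
  obtain ⟨hhom, hker⟩ := Submodule.mem_inf.mp hα
  refine Submodule.mem_inf.mpr ⟨?_, ?_⟩
  · simpa [add_comm] using (isHomogeneous_X ℂ i).mul hhom
  · rw [LinearMap.mem_ker] at hker ⊢
    rw [contractLinearMap_X_mul, hker, map_zero]

theorem span_Omega (p : PolyS n) (e : ℕ) :
    Submodule.span ℂ (Omega p e) =
      (homogeneousSubmodule (Fin (n+1)) ℂ e).map (contractLinearMap p) := by
  have hOmega : Omega p e = contractLinearMap p '' (homogeneousSubmodule (Fin (n+1)) ℂ e) := by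
    ext q
    simp [Omega, contractLinearMap_apply, eq_comm]
  rw [hOmega, Submodule.span_image, Submodule.span_eq]

theorem cr_add_finrank_annihilatorIn (p : PolyS n) (e : ℕ) :
    cr e p + Module.finrank ℂ (annihilatorIn p e) =
      Module.finrank ℂ (homogeneousSubmodule (Fin (n+1)) ℂ e) := by
  have : FiniteDimensional ℂ (homogeneousSubmodule (Fin (n+1)) ℂ e) :=
    Module.Finite.iff_fg.mpr (homogeneousSubmodule_fg _ _ e)
  rw [cr, span_Omega]
  exact Submodule.finrank_map_add_finrank_inf_ker _ _

def standardExps (p : PolyS n) (e : ℕ) : Finset (Fin (n+1) →₀ ℕ) :=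
  finsuppAntidiag univ e \
    MonomialOrder.lex.leadingExps (annihilatorIn p e) (finsuppAntidiag univ e)

theorem card_standardExps (p : PolyS n) (e : ℕ) : #(standardExps p e) = cr e p := by
  have hle : annihilatorIn p e ≤
      restrictSupport ℂ ↑(finsuppAntidiag univ e : Finset (Fin (n+1) →₀ ℕ)) := by
    rw [← homogeneousSubmodule_eq_restrictSupport]
    exact inf_le_left
  rw [standardExps, MonomialOrder.card_sdiff_leadingExps _ hle,
    ← homogeneousSubmodule_eq_restrictSupport, ← cr_add_finrank_annihilatorIn, Nat.add_sub_cancel]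

theorem lowerShadow_standardExps_succ (p : PolyS n) (e : ℕ) :
    lowerShadow (standardExps p (e + 1)) ⊆ standardExps p e :=
  MonomialOrder.lex.lowerShadow_sdiff_leadingExps_subset
    (fun _ hα i => X_mul_mem_annihilatorIn hα i) fun ν j h => by
      rw [mem_finsuppAntidiag_univ, map_add, Finsupp.degree_single] at h
      exact mem_finsuppAntidiag_univ.mpr (by omega)

theorem cr_succ_le_of_cr_le {p : PolyS n} {e : ℕ} (h : cr e p ≤ e) : cr (e + 1) p ≤ cr e p := by
  rw [← card_standardExps, ← card_standardExps]
  refine card_le_of_lowerShadow_subset (fun μ hμ => ?_) (lowerShadow_standardExps_succ p e)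
  rw [card_standardExps, mem_finsuppAntidiag_univ.mp (mem_sdiff.mp hμ).1]
  omega

theorem cr_le_of_cr_le {p : PolyS n} {i j : ℕ} (h : cr i p ≤ i) (hij : i ≤ j) : cr j p ≤ j := by
  induction j, hij using Nat.le_induction with
  | base => exact h
  | succ k _ ih => exact (cr_succ_le_of_cr_le ih).trans (ih.trans k.le_succ)

end Catalecticant

theorem catalecticant_ranks_nonincreasing_general (n d i : ℕ) (p : PolyS n) (h : cr i p ≤ i) :
    ∀ j : ℕ, i ≤ j → j + 1 ≤ d → cr (j + 1) p ≤ cr j p :=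
  fun _ hij _ => Catalecticant.cr_succ_le_of_cr_le (Catalecticant.cr_le_of_cr_le h hij)

/-- If `cr_i(p) ≤ i` for some `1 ≤ i ≤ d`, then the catalecticant ranks of `p`
are non-increasing from degree `i` on. -/
theorem catalecticant_ranks_nonincreasing (n d i : ℕ) (hi1 : 1 ≤ i) (hi2 : i ≤ d)
    (p : PolyS n) (hp : p ∈ homogeneousSubmodule (Fin (n+1)) ℂ d)
    (h : cr i p ≤ i) :
    ∀ j : ℕ, i ≤ j → j + 1 ≤ d → cr (j + 1) p ≤ cr j p :=
  catalecticant_ranks_nonincreasing_general n d i p h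
end
end
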